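/- In an HL-flock, the relative positions satisfy ‖x[t]‖∞ ≤ x0 + h v0 t for all t ≥ 0, where x0 = ‖x[0]‖∞ and v0 = ‖v[0]‖∞. -/
import Mathlib


open Finset

/-- In an HL-flock (in coordinates relative to bird `1`, here index `0`),
the relative positions satisfy `‖x[t]‖∞ ≤ x0 + h v0 t` for all `t ≥ 0`,
where `x0 = ‖x[0]‖∞` and `v0 = ‖v[0]‖∞`. -/
theorem relative_position_bound
    (k : ℕ) (hk : 2 ≤ k)
    (x v : ℕ → Fin k → EuclideanSpace ℝ (Fin 3))
    (L : Fin k → Finset (Fin k))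
    (a : ℕ → Fin k → Fin k → ℝ)
    (h : ℝ) (hh0 : 0 < h) (hh1 : h ≤ 1 / ((k : ℝ) - 1))
    (hLlt : ∀ i : Fin k, ∀ j ∈ L i, j < i)
    (hLne : ∀ i : Fin k, 0 < i.val → (L i).Nonempty)
    (ha0 : ∀ t, ∀ i : Fin k, ∀ j ∈ L i, 0 ≤ a t i j)
    (ha1 : ∀ t, ∀ i : Fin k, ∀ j ∈ L i, a t i j ≤ 1)
    (hx10 : x 0 ⟨0, by omega⟩ = 0)
    (hv10 : v 0 ⟨0, by omega⟩ = 0)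
    (hxdyn : ∀ t i, x (t + 1) i = x t i + h • v t i)
    (hvdyn : ∀ t i, v (t + 1) i =
      v t i + h • ∑ j ∈ L i, a (t + 1) i j • (v t j - v t i)) :
    ∀ t : ℕ, ‖x t‖ ≤ ‖x 0‖ + h * ‖v 0‖ * t := by
  have hk1 : (1:ℝ) ≤ (k:ℝ) - 1 := by
    have : (2:ℝ) ≤ k := by exact_mod_cast hk
    linarith
  -- velocity nonincreasing
  have hvstep : ∀ t, ‖v (t+1)‖ ≤ ‖v t‖ := by
    intro t
    have hvt0 : (0:ℝ) ≤ ‖v t‖ := norm_nonneg _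
    rw [pi_norm_le_iff_of_nonneg hvt0]
    intro i
    set S := ∑ j ∈ L i, a (t+1) i j with hS
    have hS0 : 0 ≤ S := Finset.sum_nonneg fun j hj => ha0 (t+1) i j hj
    have hScard : S ≤ (k:ℝ) - 1 := by
      have h1 : S ≤ (L i).card := by
        calc S ≤ ∑ j ∈ L i, (1:ℝ) := Finset.sum_le_sum fun j hj => ha1 (t+1) i j hj
        _ = (L i).card := by simp
      have h2 : (L i).card ≤ k - 1 := by
        have : L i ⊆ Finset.univ.erase i := by
          intro j hj
          exact Finset.mem_erase.2 ⟨Fin.ne_of_lt (hLlt i j hj), Finset.mem_univ j⟩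
        calc (L i).card ≤ (Finset.univ.erase i).card := Finset.card_le_card this
        _ = k - 1 := by simp
      calc S ≤ ((L i).card : ℝ) := h1
      _ ≤ ((k - 1 : ℕ) : ℝ) := by exact_mod_cast h2
      _ = (k:ℝ) - 1 := by
        have : (1:ℕ) ≤ k := by omega
        push_cast [this]; ring
    have hhS : h * S ≤ 1 := by
      rcases eq_or_lt_of_le hS0 with h0 | h0
      · rw [← h0]; simp
      · have := mul_le_mul hh1 hScard (le_of_lt h0) (by positivity)
        calc h * S ≤ 1 / ((k:ℝ)-1) * ((k:ℝ)-1) := this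
        _ = 1 := by field_simp
    have key : v (t+1) i = (1 - h * S) • v t i + ∑ j ∈ L i, (h * a (t+1) i j) • v t j := by
      rw [hvdyn, hS]
      simp only [smul_sub, Finset.smul_sum, smul_smul, Finset.sum_sub_distrib, sub_smul,
        one_smul, Finset.sum_smul, mul_comm]
      rw [Finset.mul_sum, Finset.sum_smul]
      abel
    rw [key]
    have hb : ∀ j ∈ L i, ‖(h * a (t+1) i j) • v t j‖ ≤ (h * a (t+1) i j) * ‖v t‖ := by
      intro j hj
      have hnn : (0:ℝ) ≤ h * a (t+1) i j := mul_nonneg hh0.le (ha0 (t+1) i j hj)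
      rw [norm_smul, Real.norm_eq_abs, abs_of_nonneg hnn]
      exact mul_le_mul_of_nonneg_left (norm_le_pi_norm _ j) hnn
    calc ‖(1 - h * S) • v t i + ∑ j ∈ L i, (h * a (t+1) i j) • v t j‖
        ≤ ‖(1 - h * S) • v t i‖ + ‖∑ j ∈ L i, (h * a (t+1) i j) • v t j‖ := norm_add_le _ _
      _ ≤ (1 - h * S) * ‖v t‖ + ∑ j ∈ L i, (h * a (t+1) i j) * ‖v t‖ := by
          gcongr ?_ + ?_
          · rw [norm_smul, Real.norm_eq_abs, abs_of_nonneg (by linarith)]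
            exact mul_le_mul_of_nonneg_left (norm_le_pi_norm _ i) (by linarith)
          · exact (norm_sum_le _ _).trans (Finset.sum_le_sum hb)
      _ = (1 - h * S) * ‖v t‖ + h * S * ‖v t‖ := by
          rw [← Finset.sum_mul, ← Finset.mul_sum]
      _ = ‖v t‖ := by ring
  have hv : ∀ t, ‖v t‖ ≤ ‖v 0‖ := by
    intro t
    induction t with
    | zero => exact le_refl _
    | succ n ih => exact (hvstep n).trans ih
  intro t
  induction t with
  | zero => simp
  | succ n ih =>
    have hx : ‖x (n+1)‖ ≤ ‖x n‖ + h * ‖v n‖ := by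
      have : x (n+1) = x n + h • v n := by
        funext i; rw [hxdyn]; rfl
      rw [this]
      calc ‖x n + h • v n‖ ≤ ‖x n‖ + ‖h • v n‖ := norm_add_le _ _
        _ = ‖x n‖ + h * ‖v n‖ := by
            rw [norm_smul, Real.norm_eq_abs, abs_of_pos hh0]
    calc ‖x (n+1)‖ ≤ ‖x n‖ + h * ‖v n‖ := hx
      _ ≤ (‖x 0‖ + h * ‖v 0‖ * n) + h * ‖v 0‖ := by
          gcongr
          exact hv n
      _ = ‖x 0‖ + h * ‖v 0‖ * (n+1 : ℕ) := by push_cast; ring
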